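/- arXiv:2007.15137 — 2 statements merged into one kernel-verified Lean document; each statement's English description precedes it below -/
import Mathlib

section
/- (Lemma 1 of the paper.) Let (ε_i)_{i≥1} be i.i.d. real random variables and let (X_i)_{i≥1} ⊂ ℝ^p be deterministic vectors satisfying assumption (A1): ‖X_i‖₂ ≤ C₀ for all i. For m, k ≥ 1 and u ∈ ℝ^p define the random vectors R_i(u) := (g_τ(ε_i − m^{−1/2}·X_iᵀu) − g_τ(ε_i))·X_i and r_{m,k}(u) := Σ_{i=m+1}^{m+k} R_i(u) (for each sample point, u ↦ r_{m,k}(u) is continuous, so the supremum below is a measurable random variable). Then for any constants C₁ > 0 and C₂ > 0 there exists a constant C₃ > 0 such that, for all sufficiently large k and m: ℙ[ sup_{‖u‖₂ ≤ C₁} ‖r_{m,k}(u) − E[r_{m,k}(u)]‖₁ ≥ √2·C₂·C₃·p·m^{−1/2}·k^{1/2}·(log k)^{1/2} ] ≤ 2·k^{−C₂²}. -/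
open MeasureTheory ProbabilityTheory
open scoped ProbabilityTheory

noncomputable def gFun (τ x : ℝ) : ℝ := if 0 ≤ x then 2 * τ * x else 2 * (1 - τ) * x

noncomputable def norm2 {p : ℕ} (v : Fin p → ℝ) : ℝ := Real.sqrt (∑ j, v j ^ 2)

def dotp {p : ℕ} (v w : Fin p → ℝ) : ℝ := ∑ j, v j * w j

/-- The `j`-th coordinate of `r_{m,k}(u) = Σ_{i=m+1}^{m+k} R_i(u)`, where
`R_i(u) = (g_τ(ε_i − m^{−1/2} X_iᵀu) − g_τ(ε_i))·X_i`. -/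
noncomputable def rProc {Ω : Type*} {p : ℕ} (τ : ℝ) (X : ℕ → Fin p → ℝ) (ε : ℕ → Ω → ℝ)
    (m k : ℕ) (u : Fin p → ℝ) (j : Fin p) (ω : Ω) : ℝ :=
  ∑ i ∈ Finset.Icc (m + 1) (m + k),
    (gFun τ (ε i ω - (Real.sqrt m)⁻¹ * dotp (X i) u) - gFun τ (ε i ω)) * X i j

/-!
Because `g_τ` is `2`-Lipschitz, every summand of a coordinate of `r_{m,k}(u)` is bounded by
`2 m^{-1/2} C₀² ‖u‖₂` and depends on `u` in a `2 m^{-1/2} C₀²`-Lipschitz way. The first bound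
and Hoeffding's inequality give each coordinate of `r_{m,k}(u) − E r_{m,k}(u)` a sub-Gaussian
tail at a fixed `u`. The second makes `u ↦ r_{m,k}(u) − E r_{m,k}(u)` Lipschitz with constant
`O(k m^{-1/2})`, so the supremum over the ball is attained up to a negligible error on a grid of
mesh `C₁ / k` with at most `(2k+1)^p` points. The union bound over this grid and the `p`
coordinates costs a factor `k^{3p}`, which is absorbed by choosing `C₃` so that the Hoeffding
exponent is `(C₂² + 3p) log k`.
-/

theorem abs_gFun_sub_le {τ : ℝ} (hτ : τ ∈ Set.Icc (0 : ℝ) 1) (a b : ℝ) :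
    |gFun τ a - gFun τ b| ≤ 2 * |a - b| := by
  obtain ⟨h0, h1⟩ := hτ
  unfold gFun
  split_ifs with ha hb hb <;> rw [abs_le] <;> constructor <;>
    cases abs_cases (a - b) <;> nlinarith

theorem measurable_gFun (τ : ℝ) : Measurable (gFun τ) :=
  Measurable.ite measurableSet_Ici (by fun_prop) (by fun_prop)

section Euclidean

variable {p : ℕ}

theorem norm2_nonneg (v : Fin p → ℝ) : 0 ≤ norm2 v := Real.sqrt_nonneg _

theorem abs_le_norm2 (v : Fin p → ℝ) (j : Fin p) : |v j| ≤ norm2 v := by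
  rw [norm2, ← Real.sqrt_sq_eq_abs]
  exact Real.sqrt_le_sqrt (Finset.single_le_sum (f := fun j => v j ^ 2)
    (fun _ _ => sq_nonneg _) (Finset.mem_univ j))

theorem norm2_le_of_abs_le {v : Fin p → ℝ} {c : ℝ} (hc : 0 ≤ c) (hv : ∀ j, |v j| ≤ c) :
    norm2 v ≤ Real.sqrt p * c := by
  rw [norm2, ← Real.sqrt_sq hc, ← Real.sqrt_mul (Nat.cast_nonneg p)]
  refine Real.sqrt_le_sqrt ?_
  calc ∑ j, v j ^ 2 ≤ ∑ _j : Fin p, c ^ 2 :=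
        Finset.sum_le_sum fun j _ => sq_le_sq' (abs_le.1 (hv j)).1 (abs_le.1 (hv j)).2
    _ = p * c ^ 2 := by simp

theorem abs_dotp_le (v w : Fin p → ℝ) : |dotp v w| ≤ norm2 v * norm2 w := by
  rw [norm2, norm2, ← Real.sqrt_mul (Finset.sum_nonneg fun _ _ => sq_nonneg _),
    ← Real.sqrt_sq_eq_abs]
  exact Real.sqrt_le_sqrt (Finset.sum_mul_sq_le_sq_mul_sq _ v w)

theorem dotp_sub (v w w' : Fin p → ℝ) : dotp v (w - w') = dotp v w - dotp v w' := by
  simp only [dotp, Pi.sub_apply, mul_sub, Finset.sum_sub_distrib]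

end Euclidean

theorem measureReal_abs_sum_sub_integral_ge_le {Ω ι : Type*} [MeasurableSpace Ω]
    {μ : Measure Ω} [IsProbabilityMeasure μ] {Y : ι → Ω → ℝ} (hind : iIndepFun Y μ)
    (hmeas : ∀ i, Measurable (Y i)) {s : Finset ι} {a t : ℝ}
    (hbound : ∀ i ∈ s, ∀ ω, |Y i ω| ≤ a) (ht : 0 ≤ t) :
    μ.real {ω | t ≤ |∑ i ∈ s, Y i ω - ∫ ω', ∑ i ∈ s, Y i ω' ∂μ|}
      ≤ 2 * Real.exp (-t ^ 2 / (2 * s.card * a ^ 2)) := by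
  have hint : ∀ i ∈ s, Integrable (Y i) μ := fun i hi =>
    Integrable.of_bound (hmeas i).aestronglyMeasurable a (ae_of_all _ (hbound i hi))
  have hcentered : iIndepFun (fun i => (· - μ[Y i]) ∘ Y i) μ :=
    hind.comp _ fun _ => measurable_id.sub_const _
  have hsub : HasSubgaussianMGF (fun ω => ∑ i ∈ s, (Y i ω - μ[Y i]))
      (∑ _i ∈ s, (‖a - -a‖₊ / 2) ^ 2) μ :=
    HasSubgaussianMGF.sum_of_iIndepFun hcentered fun i hi =>
      hasSubgaussianMGF_of_mem_Icc (hmeas i).aemeasurable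
        (ae_of_all _ fun ω => abs_le.1 (hbound i hi ω))
  have hparam : 2 * ((∑ _i ∈ s, (‖a - -a‖₊ / 2) ^ 2 : NNReal) : ℝ) = 2 * s.card * a ^ 2 := by
    simp [← two_mul, mul_assoc]
  have hcenter : ∀ ω, ∑ i ∈ s, Y i ω - ∫ ω', ∑ i ∈ s, Y i ω' ∂μ = ∑ i ∈ s, (Y i ω - μ[Y i]) :=
    fun ω => by rw [integral_finsetSum s hint, Finset.sum_sub_distrib]
  simp_rw [hcenter]
  calc μ.real {ω | t ≤ |∑ i ∈ s, (Y i ω - μ[Y i])|}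
      ≤ μ.real ({ω | t ≤ ∑ i ∈ s, (Y i ω - μ[Y i])} ∪ {ω | t ≤ -∑ i ∈ s, (Y i ω - μ[Y i])}) :=
        measureReal_mono fun _ (hω : t ≤ |_|) => le_abs.1 hω
    _ ≤ _ := measureReal_union_le _ _
    _ ≤ Real.exp (-t ^ 2 / (2 * s.card * a ^ 2)) + Real.exp (-t ^ 2 / (2 * s.card * a ^ 2)) := by
        rw [← hparam]
        exact add_le_add (hsub.measure_ge_le ht) (hsub.neg.measure_ge_le ht)
    _ = _ := by ring

theorem exists_int_mem_Icc_abs_sub_le {x : ℝ} {k : ℕ} (hx : |x| ≤ k) :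
    ∃ n ∈ Finset.Icc (-k : ℤ) k, |x - n| ≤ 1 := by
  obtain ⟨hlo, hhi⟩ := abs_le.1 hx
  refine ⟨⌊x⌋, Finset.mem_Icc.2 ⟨Int.le_floor.2 (by push_cast; exact hlo), ?_⟩, ?_⟩
  · exact_mod_cast (Int.floor_le x).trans hhi
  · rw [abs_of_nonneg (sub_nonneg.2 (Int.floor_le x))]
    linarith [Int.lt_floor_add_one x]

theorem exists_finset_grid (p : ℕ) {k : ℕ} (hk : 1 ≤ k) {C : ℝ} (hC : 0 < C) :
    ∃ G : Finset (Fin p → ℝ), G.card ≤ (2 * k + 1) ^ p ∧ (∀ v ∈ G, ∀ j, |v j| ≤ C) ∧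
      ∀ u : Fin p → ℝ, (∀ j, |u j| ≤ C) → ∃ v ∈ G, ∀ j, |u j - v j| ≤ C / k := by
  classical
  have hk' : (0 : ℝ) < k := by exact_mod_cast hk
  set pts : Finset ℝ := (Finset.Icc (-k : ℤ) k).image fun n : ℤ => C * n / k
  refine ⟨Fintype.piFinset fun _ => pts, ?_, ?_, ?_⟩
  · rw [Fintype.card_piFinset, Finset.prod_const, Finset.card_univ, Fintype.card_fin]
    refine Nat.pow_le_pow_left (Finset.card_image_le.trans ?_) p
    rw [Int.card_Icc]
    omega
  · intro v hv j
    obtain ⟨n, hn, hvj⟩ := Finset.mem_image.1 (Fintype.mem_piFinset.1 hv j)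
    rw [← hvj]
    obtain ⟨hlo, hhi⟩ := Finset.mem_Icc.1 hn
    have hn' : |(n : ℝ)| ≤ k := abs_le.2 ⟨by exact_mod_cast hlo, by exact_mod_cast hhi⟩
    rw [abs_div, abs_mul, abs_of_pos hC, abs_of_pos hk', div_le_iff₀ hk']
    exact mul_le_mul_of_nonneg_left hn' hC.le
  · intro u hu
    have hscaled : ∀ j, |u j * k / C| ≤ k := fun j => by
      rw [abs_div, abs_mul, abs_of_pos hC, abs_of_pos hk', div_le_iff₀ hC]
      nlinarith [hu j]
    choose n hn happrox using fun j => exists_int_mem_Icc_abs_sub_le (hscaled j)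
    refine ⟨fun j => C * n j / k, Fintype.mem_piFinset.2 fun j => Finset.mem_image_of_mem _ (hn j),
      fun j => ?_⟩
    have : u j - C * n j / k = C / k * (u j * k / C - n j) := by field_simp
    rw [this, abs_mul, abs_of_pos (div_pos hC hk')]
    exact mul_le_of_le_one_right (div_pos hC hk').le (happrox j)

theorem abs_sub_integral_sub_sub_integral_le {Ω : Type*} [MeasurableSpace Ω] {μ : Measure Ω}
    [IsProbabilityMeasure μ] {f g : Ω → ℝ} (hf : Integrable f μ) (hg : Integrable g μ) {c : ℝ}
    (hfg : ∀ ω, |f ω - g ω| ≤ c) (ω : Ω) :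
    |(f ω - ∫ x, f x ∂μ) - (g ω - ∫ x, g x ∂μ)| ≤ 2 * c := by
  have hmean : |∫ x, f x ∂μ - ∫ x, g x ∂μ| ≤ c := by
    rw [← integral_sub hf hg]
    simpa using norm_integral_le_of_norm_le_const (μ := μ) (f := fun x => f x - g x)
      (ae_of_all _ hfg)
  calc |(f ω - ∫ x, f x ∂μ) - (g ω - ∫ x, g x ∂μ)|
      = |(f ω - g ω) - (∫ x, f x ∂μ - ∫ x, g x ∂μ)| := by ring_nf
    _ ≤ |f ω - g ω| + |∫ x, f x ∂μ - ∫ x, g x ∂μ| := abs_sub _ _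
    _ ≤ 2 * c := by linarith [hfg ω]

theorem setOf_le_iSup_subset_biUnion {α Ω : Type*} {P : α → Prop} [Nonempty {u // P u}]
    (F : α → Ω → ℝ) (G : Finset α) {η T T' : ℝ}
    (hnet : ∀ u, P u → ∃ v ∈ G, ∀ ω, F u ω ≤ F v ω + η) (hT : T' + η < T) :
    {ω | T ≤ ⨆ u : {u // P u}, F u ω} ⊆ ⋃ v ∈ G, {ω | T' ≤ F v ω} := by
  intro ω (hω : T ≤ _)
  obtain ⟨u, hu⟩ := exists_lt_of_lt_ciSup (hT.trans_le hω)
  obtain ⟨v, hv, hle⟩ := hnet u u.2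
  exact Set.mem_biUnion hv (show T' ≤ F v ω by linarith [hle ω])

theorem measure_le_iSup_sum_abs_le {Ω : Type*} [MeasurableSpace Ω] (μ : Measure Ω) {p k : ℕ}
    (hp : 1 ≤ p) (hk : 1 ≤ k) (Z : (Fin p → ℝ) → Fin p → Ω → ℝ) {Λ C t : ℝ} {q : ENNReal}
    (hC : 0 < C) (hΛ : 0 ≤ Λ) (hlip : ∀ u v j ω, |Z u j ω - Z v j ω| ≤ Λ * norm2 (u - v))
    (htail : ∀ v : Fin p → ℝ, (∀ j, |v j| ≤ C) → ∀ j, μ {ω | t ≤ |Z v j ω|} ≤ q)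
    (hΛt : Λ * Real.sqrt p * C < k * t) :
    μ {ω | 2 * p * t ≤ ⨆ u : {u : Fin p → ℝ // norm2 u ≤ C}, ∑ j, |Z u j ω|}
      ≤ ((2 * k + 1) ^ p * p : ℕ) * q := by
  obtain ⟨G, hcard, hGC, hGnet⟩ := exists_finset_grid p hk hC
  have hp' : (0 : ℝ) < p := by exact_mod_cast hp
  have hk' : (0 : ℝ) < k := by exact_mod_cast hk
  have : Nonempty {u : Fin p → ℝ // norm2 u ≤ C} := ⟨⟨0, by simpa [norm2] using hC.le⟩⟩
  have hnet : ∀ u : Fin p → ℝ, norm2 u ≤ C → ∃ v ∈ G, ∀ ω,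
      ∑ j, |Z u j ω| ≤ ∑ j, |Z v j ω| + p * (Λ * (Real.sqrt p * (C / k))) := by
    intro u hu
    obtain ⟨v, hv, hclose⟩ := hGnet u fun j => (abs_le_norm2 u j).trans hu
    have hd : Λ * norm2 (u - v) ≤ Λ * (Real.sqrt p * (C / k)) :=
      mul_le_mul_of_nonneg_left (norm2_le_of_abs_le (by positivity) hclose) hΛ
    refine ⟨v, hv, fun ω => ?_⟩
    calc ∑ j, |Z u j ω| ≤ ∑ j, (|Z v j ω| + Λ * (Real.sqrt p * (C / k))) :=
          Finset.sum_le_sum fun j _ => by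
            linarith [abs_sub_abs_le_abs_sub (Z u j ω) (Z v j ω), hlip u v j ω]
      _ = ∑ j, |Z v j ω| + p * (Λ * (Real.sqrt p * (C / k))) := by
          simp [Finset.sum_add_distrib]
  have hslack : p * t + p * (Λ * (Real.sqrt p * (C / k))) < 2 * p * t := by
    have : Λ * (Real.sqrt p * (C / k)) < t := by
      rw [show Λ * (Real.sqrt p * (C / k)) = Λ * Real.sqrt p * C / k by ring, div_lt_iff₀ hk']
      linarith
    nlinarith
  have hpigeon : ∀ v : Fin p → ℝ, {ω | p * t ≤ ∑ j, |Z v j ω|} ⊆ ⋃ j, {ω | t ≤ |Z v j ω|} := by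
    intro v ω (hω : p * t ≤ _)
    obtain ⟨j, -, hj⟩ := Finset.exists_le_of_sum_le (f := fun _ => t) (g := fun j => |Z v j ω|)
      (Finset.univ_nonempty_iff.2 ⟨⟨0, hp⟩⟩)
      (by simpa using hω)
    exact Set.mem_iUnion.2 ⟨j, hj⟩
  calc μ {ω | 2 * p * t ≤ ⨆ u : {u : Fin p → ℝ // norm2 u ≤ C}, ∑ j, |Z u j ω|}
      ≤ μ (⋃ v ∈ G, ⋃ j, {ω | t ≤ |Z v j ω|}) :=
        measure_mono <| (setOf_le_iSup_subset_biUnion _ G hnet hslack).trans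
          (Set.biUnion_mono subset_rfl fun v _ => hpigeon v)
    _ ≤ ∑ v ∈ G, ∑ j, μ {ω | t ≤ |Z v j ω|} :=
        (measure_biUnion_finset_le _ _).trans
          (Finset.sum_le_sum fun _ _ => measure_iUnion_fintype_le _ _)
    _ ≤ ∑ _v ∈ G, ∑ _j : Fin p, q :=
        Finset.sum_le_sum fun v hv => Finset.sum_le_sum fun j _ => htail v (hGC v hv) j
    _ ≤ ((2 * k + 1) ^ p * p : ℕ) * q := by
        simp only [Finset.sum_const, Finset.card_univ, Fintype.card_fin, nsmul_eq_mul, ← mul_assoc]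
        gcongr
        exact_mod_cast Nat.mul_le_mul_right p hcard

noncomputable def rSummand {p : ℕ} (τ : ℝ) (X : ℕ → Fin p → ℝ) (m : ℕ) (u : Fin p → ℝ)
    (j : Fin p) (i : ℕ) (x : ℝ) : ℝ :=
  (gFun τ (x - (Real.sqrt m)⁻¹ * dotp (X i) u) - gFun τ x) * X i j

theorem card_Icc_succ_add (m k : ℕ) : (Finset.Icc (m + 1) (m + k)).card = k := by
  rw [Nat.card_Icc]; omega

section Increments

variable {p : ℕ} {τ : ℝ} {X : ℕ → Fin p → ℝ} {C₀ : ℝ}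

theorem measurable_rSummand (τ : ℝ) (X : ℕ → Fin p → ℝ) (m : ℕ) (u : Fin p → ℝ) (j : Fin p)
    (i : ℕ) : Measurable (rSummand τ X m u j i) :=
  (((measurable_gFun τ).comp (measurable_id.sub_const _)).sub (measurable_gFun τ)).mul_const _

theorem abs_rSummand_sub_le (hτ : τ ∈ Set.Icc (0 : ℝ) 1) {i : ℕ} (hX : norm2 (X i) ≤ C₀)
    (m : ℕ) (u v : Fin p → ℝ) (j : Fin p) (x : ℝ) :
    |rSummand τ X m u j i x - rSummand τ X m v j i x|
      ≤ 2 * (Real.sqrt m)⁻¹ * C₀ ^ 2 * norm2 (u - v) := by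
  have hC₀ : 0 ≤ C₀ := (norm2_nonneg _).trans hX
  have hdot : |dotp (X i) (u - v)| ≤ C₀ * norm2 (u - v) :=
    (abs_dotp_le _ _).trans (mul_le_mul_of_nonneg_right hX (norm2_nonneg _))
  calc |rSummand τ X m u j i x - rSummand τ X m v j i x|
      = |gFun τ (x - (Real.sqrt m)⁻¹ * dotp (X i) u)
          - gFun τ (x - (Real.sqrt m)⁻¹ * dotp (X i) v)| * |X i j| := by
        rw [rSummand, rSummand, ← abs_mul]; ring_nf
    _ ≤ 2 * ((Real.sqrt m)⁻¹ * |dotp (X i) (u - v)|) * C₀ := by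
        gcongr
        · refine (abs_gFun_sub_le hτ _ _).trans_eq ?_
          rw [show x - (Real.sqrt m)⁻¹ * dotp (X i) u - (x - (Real.sqrt m)⁻¹ * dotp (X i) v)
              = -((Real.sqrt m)⁻¹ * dotp (X i) (u - v)) by rw [dotp_sub]; ring,
            abs_neg, abs_mul, abs_of_nonneg (by positivity)]
        · exact (abs_le_norm2 _ _).trans hX
    _ ≤ 2 * ((Real.sqrt m)⁻¹ * (C₀ * norm2 (u - v))) * C₀ := by gcongr
    _ = 2 * (Real.sqrt m)⁻¹ * C₀ ^ 2 * norm2 (u - v) := by ring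

theorem abs_rSummand_le (hτ : τ ∈ Set.Icc (0 : ℝ) 1) {i : ℕ} (hX : norm2 (X i) ≤ C₀)
    (m : ℕ) (u : Fin p → ℝ) (j : Fin p) (x : ℝ) :
    |rSummand τ X m u j i x| ≤ 2 * (Real.sqrt m)⁻¹ * C₀ ^ 2 * norm2 u := by
  simpa [rSummand, dotp] using abs_rSummand_sub_le hτ hX m u 0 j x

theorem abs_rProc_sub_le {Ω : Type*} (hτ : τ ∈ Set.Icc (0 : ℝ) 1) (hX : ∀ i, norm2 (X i) ≤ C₀)
    (ε : ℕ → Ω → ℝ) (m k : ℕ) (u v : Fin p → ℝ) (j : Fin p) (ω : Ω) :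
    |rProc τ X ε m k u j ω - rProc τ X ε m k v j ω|
      ≤ k * (2 * (Real.sqrt m)⁻¹ * C₀ ^ 2 * norm2 (u - v)) := by
  calc |rProc τ X ε m k u j ω - rProc τ X ε m k v j ω|
      = |∑ i ∈ Finset.Icc (m + 1) (m + k),
          (rSummand τ X m u j i (ε i ω) - rSummand τ X m v j i (ε i ω))| := by
        rw [Finset.sum_sub_distrib]; rfl
    _ ≤ ∑ i ∈ Finset.Icc (m + 1) (m + k), 2 * (Real.sqrt m)⁻¹ * C₀ ^ 2 * norm2 (u - v) :=
        (Finset.abs_sum_le_sum_abs _ _).trans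
          (Finset.sum_le_sum fun i _ => abs_rSummand_sub_le hτ (hX i) m u v j _)
    _ = _ := by rw [Finset.sum_const, card_Icc_succ_add, nsmul_eq_mul]

theorem integrable_rProc {Ω : Type*} [MeasureSpace Ω] [IsProbabilityMeasure (ℙ : Measure Ω)]
    (hτ : τ ∈ Set.Icc (0 : ℝ) 1) (hX : ∀ i, norm2 (X i) ≤ C₀) {ε : ℕ → Ω → ℝ}
    (hmeas : ∀ i, Measurable (ε i)) (m k : ℕ) (u : Fin p → ℝ) (j : Fin p) :
    Integrable (rProc τ X ε m k u j) ℙ := by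
  refine Integrable.of_bound ?_ (k * (2 * (Real.sqrt m)⁻¹ * C₀ ^ 2 * norm2 u))
    (ae_of_all _ fun ω => ?_)
  · exact (Finset.measurable_sum _ fun i _ =>
      (measurable_rSummand τ X m u j i).comp (hmeas i)).aestronglyMeasurable
  · have h := abs_rProc_sub_le hτ hX ε m k u 0 j ω
    simpa [rProc, dotp] using h

theorem measure_abs_rProc_sub_integral_ge_le {Ω : Type*} [MeasureSpace Ω]
    [IsProbabilityMeasure (ℙ : Measure Ω)] (hτ : τ ∈ Set.Icc (0 : ℝ) 1)
    (hX : ∀ i, norm2 (X i) ≤ C₀) {ε : ℕ → Ω → ℝ} (hmeas : ∀ i, Measurable (ε i))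
    (hindep : iIndepFun ε ℙ) (m k : ℕ) {u : Fin p → ℝ} (j : Fin p) {B t : ℝ}
    (hu : norm2 u ≤ B) (ht : 0 ≤ t) :
    ℙ {ω | t ≤ |rProc τ X ε m k u j ω - ∫ ω', rProc τ X ε m k u j ω'|}
      ≤ ENNReal.ofReal
          (2 * Real.exp (-t ^ 2 / (2 * k * (2 * (Real.sqrt m)⁻¹ * C₀ ^ 2 * B) ^ 2))) := by
  have hbound : ∀ i ∈ Finset.Icc (m + 1) (m + k), ∀ ω,
      |rSummand τ X m u j i (ε i ω)| ≤ 2 * (Real.sqrt m)⁻¹ * C₀ ^ 2 * B := fun i _ ω =>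
    (abs_rSummand_le hτ (hX i) m u j _).trans (by
      have := (norm2_nonneg _).trans (hX i); gcongr)
  have h := measureReal_abs_sum_sub_integral_ge_le
    (hindep.comp _ fun i => measurable_rSummand τ X m u j i)
    (fun i => (measurable_rSummand τ X m u j i).comp (hmeas i)) hbound ht
  rw [card_Icc_succ_add] at h
  rw [← ofReal_measureReal]
  exact ENNReal.ofReal_le_ofReal h

end Increments

theorem measure_le_iSup_rProc_le {Ω : Type*} [MeasureSpace Ω]
    [IsProbabilityMeasure (ℙ : Measure Ω)] {p : ℕ} {τ : ℝ} {X : ℕ → Fin p → ℝ} {C₀ : ℝ}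
    (hτ : τ ∈ Set.Icc (0 : ℝ) 1) (hp : 1 ≤ p) (hX : ∀ i, norm2 (X i) ≤ C₀)
    {ε : ℕ → Ω → ℝ} (hmeas : ∀ i, Measurable (ε i)) (hindep : iIndepFun ε ℙ) (m : ℕ) {k : ℕ}
    (hk : 1 ≤ k) {C₁ t : ℝ} (hC₁ : 0 < C₁)
    (ht : 4 * (Real.sqrt m)⁻¹ * C₀ ^ 2 * Real.sqrt p * C₁ < t) :
    ℙ {ω | 2 * p * t ≤ ⨆ u : {u : Fin p → ℝ // norm2 u ≤ C₁},
        ∑ j, |rProc τ X ε m k u.1 j ω - ∫ ω', rProc τ X ε m k u.1 j ω'|}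
      ≤ ((2 * k + 1) ^ p * p : ℕ) * ENNReal.ofReal (2 * Real.exp
          (-t ^ 2 / (2 * k * (2 * (Real.sqrt m)⁻¹ * C₀ ^ 2 * (Real.sqrt p * C₁)) ^ 2))) := by
  have hC₀ : 0 ≤ C₀ := (norm2_nonneg _).trans (hX 0)
  have hk' : (0 : ℝ) < k := by exact_mod_cast hk
  refine measure_le_iSup_sum_abs_le ℙ hp hk
    (fun u j ω => rProc τ X ε m k u j ω - ∫ ω', rProc τ X ε m k u j ω')
    (Λ := 2 * k * (2 * (Real.sqrt m)⁻¹ * C₀ ^ 2)) hC₁ (by positivity)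
    (fun u v j ω => ?_) (fun v hv j => ?_) ?_
  · exact (abs_sub_integral_sub_sub_integral_le (integrable_rProc hτ hX hmeas m k u j)
      (integrable_rProc hτ hX hmeas m k v j) (abs_rProc_sub_le hτ hX ε m k u v j) ω).trans_eq
      (by ring)
  · exact measure_abs_rProc_sub_integral_ge_le hτ hX hmeas hindep m k j
      (norm2_le_of_abs_le hC₁.le hv) ((by positivity : (0 : ℝ) ≤ _).trans ht.le)
  · nlinarith

theorem two_mul_add_one_pow_mul_le_pow {k : ℕ} (hk : 3 ≤ k) (p : ℕ) :
    (2 * k + 1) ^ p * p ≤ k ^ (3 * p) := by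
  calc (2 * k + 1) ^ p * p ≤ (k ^ 2) ^ p * k ^ p :=
        Nat.mul_le_mul (Nat.pow_le_pow_left (by nlinarith) p)
          (Nat.lt_pow_self (by omega)).le
    _ = k ^ (3 * p) := by ring

theorem natCast_mul_ofReal_rpow_le {k N n : ℕ} (hk : 1 ≤ k) (hN : N ≤ k ^ n) (c : ℝ) :
    (N : ENNReal) * ENNReal.ofReal (2 * (k : ℝ) ^ (-(c + n)))
      ≤ ENNReal.ofReal (2 * (k : ℝ) ^ (-c)) := by
  have hk' : (0 : ℝ) < k := by exact_mod_cast hk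
  rw [← ENNReal.ofReal_natCast, ← ENNReal.ofReal_mul (Nat.cast_nonneg N)]
  refine ENNReal.ofReal_le_ofReal ?_
  have hN' : (N : ℝ) ≤ (k : ℝ) ^ n := by exact_mod_cast hN
  rw [neg_add, Real.rpow_add hk', Real.rpow_neg hk'.le (n : ℝ), Real.rpow_natCast]
  calc (N : ℝ) * (2 * ((k : ℝ) ^ (-c) * ((k : ℝ) ^ n)⁻¹))
      = 2 * (k : ℝ) ^ (-c) * (N / (k : ℝ) ^ n) := by ring
    _ ≤ 2 * (k : ℝ) ^ (-c) * 1 := by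
        gcongr; exact div_le_one_of_le₀ hN' (by positivity)
    _ = _ := mul_one _

theorem stmt7_general {Ω : Type*} [MeasureSpace Ω] [IsProbabilityMeasure (ℙ : Measure Ω)]
    (τ : ℝ) (hτ : τ ∈ Set.Ioo (0 : ℝ) 1) (p : ℕ) (hp : 1 ≤ p)
    (C₀ : ℝ) (hC₀ : 0 < C₀)
    -- (A1): deterministic designs
    (X : ℕ → Fin p → ℝ) (hX : ∀ i, norm2 (X i) ≤ C₀)
    -- i.i.d. errors
    (ε : ℕ → Ω → ℝ) (hmeas : ∀ i, Measurable (ε i))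
    (hindep : iIndepFun ε ℙ)
    (C₁ C₂ : ℝ) (hC₁ : 0 < C₁) (hC₂ : 0 < C₂) :
    ∃ C₃ > (0 : ℝ), ∃ K M : ℕ, ∀ k ≥ K, ∀ m ≥ M,
      ℙ {ω | Real.sqrt 2 * C₂ * C₃ * p * (Real.sqrt m)⁻¹ * Real.sqrt k
              * Real.sqrt (Real.log k)
            ≤ ⨆ u : {u : Fin p → ℝ // norm2 u ≤ C₁},
                ∑ j, |rProc τ X ε m k u.1 j ω - ∫ ω', rProc τ X ε m k u.1 j ω'|}
        ≤ ENNReal.ofReal (2 * (k : ℝ) ^ (-(C₂ ^ 2))) := by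
  set E : ℝ := C₂ ^ 2 + (3 * p : ℕ)
  have hE : 3 ≤ E := by
    have : (1 : ℝ) ≤ p := by exact_mod_cast hp
    simp only [E]; push_cast; nlinarith [sq_nonneg C₂]
  refine ⟨4 * C₀ ^ 2 * C₁ * Real.sqrt p * Real.sqrt E / C₂, by positivity, 3, 1,
    fun k hk m hm => ?_⟩
  have hk' : (3 : ℝ) ≤ k := by exact_mod_cast hk
  have hlog : 1 ≤ Real.log k := by
    rw [Real.le_log_iff_exp_le (by positivity)]; linarith [Real.exp_one_lt_three]
  set y := 2 * Real.sqrt 2 * Real.sqrt E * Real.sqrt k * Real.sqrt (Real.log k)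
  have hy2 : y ^ 2 = 8 * E * k * Real.log k := by
    simp only [y, mul_pow, Real.sq_sqrt (by positivity : (0 : ℝ) ≤ 2),
      Real.sq_sqrt (by positivity : (0 : ℝ) ≤ E), Real.sq_sqrt (by positivity : (0 : ℝ) ≤ k),
      Real.sq_sqrt (by positivity : (0 : ℝ) ≤ Real.log k)]
    ring
  have hy : 4 < y := by
    nlinarith [show 0 ≤ y by positivity, mul_le_mul hE hk' (by norm_num) (by positivity)]
  have hscale : 0 < (Real.sqrt m)⁻¹ * (C₀ ^ 2 * Real.sqrt p * C₁) := by positivity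
  set t := (Real.sqrt m)⁻¹ * (C₀ ^ 2 * Real.sqrt p * C₁) * y
  have hthreshold : Real.sqrt 2 * C₂ * (4 * C₀ ^ 2 * C₁ * Real.sqrt p * Real.sqrt E / C₂) * p
      * (Real.sqrt m)⁻¹ * Real.sqrt k * Real.sqrt (Real.log k) = 2 * p * t := by
    simp only [t, y]; field_simp; ring
  have hexponent : -t ^ 2 / (2 * k * (2 * (Real.sqrt m)⁻¹ * C₀ ^ 2 * (Real.sqrt p * C₁)) ^ 2)
      = Real.log k * -E := by
    rw [show t ^ 2 = (Real.sqrt m)⁻¹ ^ 2 * (C₀ ^ 2 * Real.sqrt p * C₁) ^ 2 * y ^ 2 by ring, hy2]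
    field_simp
    ring
  rw [hthreshold]
  refine (measure_le_iSup_rProc_le (Set.Ioo_subset_Icc_self hτ) hp hX hmeas hindep m
    (by omega) hC₁ (by nlinarith)).trans ?_
  rw [hexponent, ← Real.rpow_def_of_pos (by positivity)]
  exact natCast_mul_ofReal_rpow_le (by omega) (two_mul_add_one_pow_mul_le_pow hk p) _

theorem stmt7 {Ω : Type*} [MeasureSpace Ω] [IsProbabilityMeasure (ℙ : Measure Ω)]
    (τ : ℝ) (hτ : τ ∈ Set.Ioo (0 : ℝ) 1) (p : ℕ) (hp : 1 ≤ p)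
    (C₀ : ℝ) (hC₀ : 0 < C₀)
    -- (A1): deterministic designs
    (X : ℕ → Fin p → ℝ) (hX : ∀ i, norm2 (X i) ≤ C₀)
    -- i.i.d. errors
    (ε : ℕ → Ω → ℝ) (hmeas : ∀ i, Measurable (ε i))
    (hindep : iIndepFun ε ℙ)
    (hident : ∀ i, Measure.map (ε i) ℙ = Measure.map (ε 0) ℙ)
    (C₁ C₂ : ℝ) (hC₁ : 0 < C₁) (hC₂ : 0 < C₂) :
    ∃ C₃ > (0 : ℝ), ∃ K M : ℕ, ∀ k ≥ K, ∀ m ≥ M,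
      ℙ {ω | Real.sqrt 2 * C₂ * C₃ * p * (Real.sqrt m)⁻¹ * Real.sqrt k
              * Real.sqrt (Real.log k)
            ≤ ⨆ u : {u : Fin p → ℝ // norm2 u ≤ C₁},
                ∑ j, |rProc τ X ε m k u.1 j ω - ∫ ω', rProc τ X ε m k u.1 j ω'|}
        ≤ ENNReal.ofReal (2 * (k : ℝ) ^ (-(C₂ ^ 2))) :=
  stmt7_general τ hτ p hp C₀ hC₀ X hX ε hmeas hindep C₁ C₂ hC₁ hC₂
end

section
/- (Karush–Kuhn–Tucker conditions for the adaptive LASSO expectile estimator.) Fix an expectile index τ ∈ (0,1), integers m, p ≥ 1, reals Y₁,…,Y_m, vectors X₁,…,X_m ∈ ℝ^p with coordinates X_{ij}, a constant λ > 0 and weights w₁,…,w_p > 0. If β̂ ∈ ℝ^p minimizes the function β ↦ Σ_{i=1}^m ρ_τ(Y_i − X_iᵀβ) + m·λ·Σ_{j=1}^p w_j·|β_j| over ℝ^p, then: (i) for every j with β̂_j ≠ 0, Σ_{i=1}^m g_τ(Y_i − X_iᵀβ̂)·X_{ij} = m·λ·w_j·sgn(β̂_j); and (ii) for every j with β̂_j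 = 0, |Σ_{i=1}^m g_τ(Y_i − X_iᵀβ̂)·X_{ij}| ≤ m·λ·w_j. -/
/-- Expectile loss `ρ_τ(x) = |τ − 1_{x<0}| x²`. -/
noncomputable def expLoss (τ x : ℝ) : ℝ := |τ - (if x < 0 then 1 else 0)| * x ^ 2

/-- The sign function: `x/|x|` for `x ≠ 0` and `0` at `0`. -/
noncomputable def sgn (x : ℝ) : ℝ := if x = 0 then 0 else x / |x|

/-! Restrict the objective to the line through `β̂` in the `j`-th coordinate direction. This gives
`s ↦ ℓ(s) + mλw_j|s|` with a global minimum at `s = β̂_j`, where `ℓ` is differentiable because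
`ρ_τ` is `C¹` with `ρ_τ' = g_τ`, and `ℓ'(β̂_j) = -∑ᵢ g_τ(Yᵢ - Xᵢᵀβ̂) X_ij`. If `β̂_j ≠ 0`, `|·|` is
differentiable at `β̂_j` with derivative `sgn β̂_j`, and Fermat's rule gives (i). If `β̂_j = 0`, the
minimum at `0` of `ℓ(s) ± mλw_j s` on the half-lines `s ≥ 0` and `s ≤ 0` gives
`ℓ'(0) + mλw_j ≥ 0 ≥ ℓ'(0) - mλw_j`, which is (ii). -/

open Function Set Filter

section Expectile

variable {τ : ℝ}

lemma expLoss_of_nonneg (hτ : 0 ≤ τ) {x : ℝ} (hx : 0 ≤ x) : expLoss τ x = τ * x ^ 2 := by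
  rw [expLoss, if_neg hx.not_gt, sub_zero, abs_of_nonneg hτ]

lemma expLoss_of_nonpos (hτ : τ ≤ 1) {x : ℝ} (hx : x ≤ 0) : expLoss τ x = (1 - τ) * x ^ 2 := by
  rcases hx.lt_or_eq with hx | rfl
  · rw [expLoss, if_pos hx, abs_of_nonpos (by linarith)]
    ring
  · simp [expLoss]

lemma hasDerivWithinAt_expLoss_Ici (hτ : 0 ≤ τ) {x : ℝ} (hx : 0 ≤ x) :
    HasDerivWithinAt (expLoss τ) (gFun τ x) (Ici 0) x := by
  have h := ((hasDerivAt_pow 2 x).const_mul τ).hasDerivWithinAt (s := Ici 0)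
  rw [gFun, if_pos hx]
  refine (h.congr (fun y hy => expLoss_of_nonneg hτ hy) (expLoss_of_nonneg hτ hx)).congr_deriv ?_
  ring

lemma hasDerivWithinAt_expLoss_Iic (hτ : τ ≤ 1) {x : ℝ} (hx : x ≤ 0) :
    HasDerivWithinAt (expLoss τ) (gFun τ x) (Iic 0) x := by
  have h := ((hasDerivAt_pow 2 x).const_mul (1 - τ)).hasDerivWithinAt (s := Iic 0)
  have hg : gFun τ x = 2 * (1 - τ) * x := by
    rcases hx.lt_or_eq with hx | rfl
    · rw [gFun, if_neg hx.not_ge]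
    · simp [gFun]
  rw [hg]
  refine (h.congr (fun y hy => expLoss_of_nonpos hτ hy) (expLoss_of_nonpos hτ hx)).congr_deriv ?_
  ring

lemma hasDerivAt_expLoss (hτ : τ ∈ Ioo (0 : ℝ) 1) (x : ℝ) :
    HasDerivAt (expLoss τ) (gFun τ x) x := by
  rcases lt_trichotomy x 0 with hx | rfl | hx
  · exact (hasDerivWithinAt_expLoss_Iic hτ.2.le hx.le).hasDerivAt (Iic_mem_nhds hx)
  · have h := (hasDerivWithinAt_expLoss_Iic hτ.2.le le_rfl).union
      (hasDerivWithinAt_expLoss_Ici hτ.1.le le_rfl)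
    rwa [Iic_union_Ici, hasDerivWithinAt_univ] at h
  · exact (hasDerivWithinAt_expLoss_Ici hτ.1.le hx.le).hasDerivAt (Ici_mem_nhds hx)

end Expectile

lemma sgn_eq_sign (x : ℝ) : sgn x = SignType.sign x := by
  rcases lt_trichotomy x 0 with hx | rfl | hx
  · rw [sgn, if_neg hx.ne, abs_of_neg hx, div_neg, div_self hx.ne, sign_neg hx]
    simp
  · simp [sgn]
  · rw [sgn, if_neg hx.ne', abs_of_pos hx, div_self hx.ne', sign_pos hx]
    simp

section FirstOrder

variable {f : ℝ → ℝ} {a c d : ℝ}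

lemma IsLocalMinOn.nonneg_of_hasDerivAt_Ici (h : IsLocalMinOn f (Ici a) a)
    (hf : HasDerivAt f d a) : 0 ≤ d := by
  have hy : (1 : ℝ) ∈ posTangentConeAt (Ici a) a :=
    mem_posTangentConeAt_of_segment_subset
      ((segment_subset_Icc (by linarith)).trans Icc_subset_Ici_self)
  simpa using h.hasFDerivWithinAt_nonneg hf.hasFDerivAt.hasFDerivWithinAt hy

lemma IsLocalMinOn.nonpos_of_hasDerivAt_Iic (h : IsLocalMinOn f (Iic a) a)
    (hf : HasDerivAt f d a) : d ≤ 0 := by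
  have hy : (-1 : ℝ) ∈ posTangentConeAt (Iic a) a := by
    refine mem_posTangentConeAt_of_segment_subset ?_
    rw [segment_symm]
    exact (segment_subset_Icc (by linarith)).trans Icc_subset_Iic_self
  simpa using h.hasFDerivWithinAt_nonneg hf.hasFDerivAt.hasFDerivWithinAt hy

lemma add_mul_sgn_eq_zero_of_isLocalMin_add_mul_abs (hf : HasDerivAt f d a)
    (h : IsLocalMin (fun s => f s + c * |s|) a) (ha : a ≠ 0) : d + c * sgn a = 0 := by
  rw [sgn_eq_sign]
  exact h.hasDerivAt_eq_zero (hf.add ((hasDerivAt_abs ha).const_mul c))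

lemma abs_le_of_isLocalMin_add_mul_abs (hf : HasDerivAt f d 0)
    (h : IsLocalMin (fun s => f s + c * |s|) 0) : |d| ≤ c := by
  have hright : IsLocalMinOn (fun s => f s + c * s) (Ici 0) 0 := by
    refine (h.on (Ici 0)).congr ?_ self_mem_Ici
    filter_upwards [self_mem_nhdsWithin] with s (hs : 0 ≤ s)
    rw [abs_of_nonneg hs]
  have hleft : IsLocalMinOn (fun s => f s - c * s) (Iic 0) 0 := by
    refine (h.on (Iic 0)).congr ?_ self_mem_Iic
    filter_upwards [self_mem_nhdsWithin] with s (hs : s ≤ 0)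
    rw [abs_of_nonpos hs]
    ring
  have h1 := hright.nonneg_of_hasDerivAt_Ici (hf.add ((hasDerivAt_id' 0).const_mul c))
  have h2 := hleft.nonpos_of_hasDerivAt_Iic (hf.sub ((hasDerivAt_id' 0).const_mul c))
  rw [abs_le]
  constructor <;> linarith

end FirstOrder

lemma sum_apply_update {ι : Type*} [Fintype ι] [DecidableEq ι] (g : ι → ℝ → ℝ) (β : ι → ℝ)
    (j : ι) (s : ℝ) :
    ∑ k, g k (update β j s k) = ∑ k, g k (β k) + (g j s - g j (β j)) := by
  rw [← Finset.add_sum_erase _ _ (Finset.mem_univ j),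
    ← Finset.add_sum_erase _ _ (Finset.mem_univ j), update_self,
    Finset.sum_congr rfl fun k hk => by rw [update_of_ne (Finset.ne_of_mem_erase hk)]]
  ring

lemma dotp_update {p : ℕ} (v β : Fin p → ℝ) (j : Fin p) (s : ℝ) :
    dotp v (update β j s) = dotp v β + v j * (s - β j) := by
  rw [dotp, dotp, sum_apply_update (fun k x => v k * x)]
  ring

section Lasso

noncomputable def expectileRisk {m p : ℕ} (τ : ℝ) (Y : Fin m → ℝ) (X : Fin m → Fin p → ℝ)
    (β : Fin p → ℝ) : ℝ :=
  ∑ i, expLoss τ (Y i - dotp (X i) β)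

variable {m p : ℕ} {τ : ℝ} (Y : Fin m → ℝ) (X : Fin m → Fin p → ℝ)

lemma hasDerivAt_expectileRisk_update (hτ : τ ∈ Ioo (0 : ℝ) 1) (β : Fin p → ℝ)
    (j : Fin p) :
    HasDerivAt (fun s => expectileRisk τ Y X (update β j s))
      (-∑ i, gFun τ (Y i - dotp (X i) β) * X i j) (β j) := by
  rw [← Finset.sum_neg_distrib]
  refine HasDerivAt.fun_sum fun i _ => ?_
  have hres : HasDerivAt (fun s => Y i - dotp (X i) (update β j s)) (-X i j) (β j) := by
    simp_rw [dotp_update]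
    simpa using (((hasDerivAt_id' (β j)).sub_const (β j)).const_mul (X i j)).const_add
      (dotp (X i) β) |>.const_sub (Y i)
  have := (hasDerivAt_expLoss hτ (Y i - dotp (X i) (update β j (β j)))).comp (β j) hres
  simpa [comp_def] using this

lemma isLocalMin_expectileRisk_update_add_mul_abs {c : ℝ} {w βhat : Fin p → ℝ}
    (hmin : IsMinOn (fun β => expectileRisk τ Y X β + c * ∑ k, w k * |β k|) univ βhat)
    (j : Fin p) :
    IsLocalMin (fun s => expectileRisk τ Y X (update βhat j s) + c * w j * |s|) (βhat j) := by
  refine IsMinOn.isLocalMin (fun s _ => ?_) univ_mem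
  have h := hmin (mem_univ (update βhat j s))
  simp only [mem_ofPred_eq, sum_apply_update (fun k x => w k * |x|)] at h
  simp only [mem_ofPred_eq, update_eq_self]
  linarith

end Lasso

theorem stmt11_general (τ : ℝ) (hτ : τ ∈ Set.Ioo (0 : ℝ) 1) (m p : ℕ)
    (Y : Fin m → ℝ) (X : Fin m → Fin p → ℝ)
    (lam : ℝ) (w : Fin p → ℝ)
    (βhat : Fin p → ℝ)
    (hmin : IsMinOn (fun β : Fin p → ℝ =>
        (∑ i, expLoss τ (Y i - dotp (X i) β)) + m * lam * ∑ j, w j * |β j|)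
      Set.univ βhat) :
    (∀ j, βhat j ≠ 0 →
      ∑ i, gFun τ (Y i - dotp (X i) βhat) * X i j = m * lam * w j * sgn (βhat j)) ∧
    (∀ j, βhat j = 0 →
      |∑ i, gFun τ (Y i - dotp (X i) βhat) * X i j| ≤ m * lam * w j) := by
  have hderiv := hasDerivAt_expectileRisk_update Y X hτ βhat
  have hloc := isLocalMin_expectileRisk_update_add_mul_abs Y X hmin
  refine ⟨fun j hj => ?_, fun j hj => ?_⟩
  · linarith [add_mul_sgn_eq_zero_of_isLocalMin_add_mul_abs (hderiv j) (hloc j) hj]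
  · rw [← abs_neg]
    exact abs_le_of_isLocalMin_add_mul_abs (hj ▸ hderiv j) (hj ▸ hloc j)

theorem stmt11 (τ : ℝ) (hτ : τ ∈ Set.Ioo (0 : ℝ) 1) (m p : ℕ) (hm : 1 ≤ m) (hp : 1 ≤ p)
    (Y : Fin m → ℝ) (X : Fin m → Fin p → ℝ)
    (lam : ℝ) (hlam : 0 < lam) (w : Fin p → ℝ) (hw : ∀ j, 0 < w j)
    (βhat : Fin p → ℝ)
    (hmin : IsMinOn (fun β : Fin p → ℝ =>
        (∑ i, expLoss τ (Y i - dotp (X i) β)) + m * lam * ∑ j, w j * |β j|)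
      Set.univ βhat) :
    (∀ j, βhat j ≠ 0 →
      ∑ i, gFun τ (Y i - dotp (X i) βhat) * X i j = m * lam * w j * sgn (βhat j)) ∧
    (∀ j, βhat j = 0 →
      |∑ i, gFun τ (Y i - dotp (X i) βhat) * X i j| ≤ m * lam * w j) :=
  stmt11_general τ hτ m p Y X lam w βhat hmin
end
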